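/- arXiv:1808.01576 — 4 statements merged into one kernel-verified Lean document; each statement's English description precedes it below -/
import Mathlib

section
/- Let H be a Hilbert space, T : H → H' a bounded symmetric positive operator inducing the norm ‖w‖² = ⟨Tw, w⟩, and D a bounded bilinear form on H with D(w,w) = 0 for all w. Define B := (1-η)I - η T^{-1}D̃, where D̃w ∈ H' is defined by ⟨D̃w, v⟩ = D(w,v) and η ∈ (0,1]. Then for every w ∈ H, ‖Bw‖² = (1-η)² ‖w‖² + η² ‖T^{-1}D̃w‖². In particular, if ‖T^{-1}D̃w‖ ≤ C‖w‖ for all w, the choice η* = 1/(1+C²) gives ‖Bw‖ ≤ √(1 - 1/(1+C²)) ‖w‖. -/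
open RealInnerProductSpace

/-- Let `H` be a Hilbert space, `T` a bounded symmetric positive operator inducing the norm
`‖w‖² = ⟨Tw, w⟩` (with bounded inverse `Tinv`), and `D` a bounded bilinear form with
`D(w,w) = 0`, represented by the operator `Dt` via `D(w,v) = ⟨Dt w, v⟩`.  With
`B = (1-η)I - η T⁻¹ Dt` for `η ∈ (0,1]`, one has
`‖Bw‖² = (1-η)²‖w‖² + η²‖T⁻¹ Dt w‖²`; and if `‖T⁻¹ Dt w‖ ≤ C‖w‖` for all `w`, the choice
`η* = 1/(1+C²)` gives `‖Bw‖ ≤ √(1 - 1/(1+C²)) ‖w‖`. -/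
theorem stmt_4 {H : Type*} [NormedAddCommGroup H] [InnerProductSpace ℝ H] [CompleteSpace H]
    (T Tinv Dt : H →L[ℝ] H)
    (hsymm : ∀ v w : H, ⟪T v, w⟫ = ⟪v, T w⟫)
    (hpos : ∀ w : H, 0 ≤ ⟪T w, w⟫)
    (hnorm : ∀ w : H, ‖w‖ ^ 2 = ⟪T w, w⟫)
    (hTinv₁ : ∀ w : H, Tinv (T w) = w) (hTinv₂ : ∀ w : H, T (Tinv w) = w)
    (hD : ∀ w : H, ⟪Dt w, w⟫ = 0)
    (η : ℝ) (hη0 : 0 < η) (hη1 : η ≤ 1) :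
    (∀ w : H, ‖(1 - η) • w - η • Tinv (Dt w)‖ ^ 2 =
        (1 - η) ^ 2 * ‖w‖ ^ 2 + η ^ 2 * ‖Tinv (Dt w)‖ ^ 2) ∧
    (∀ C : ℝ, 0 ≤ C → (∀ w : H, ‖Tinv (Dt w)‖ ≤ C * ‖w‖) →
      ∀ w : H, ‖(1 - 1 / (1 + C ^ 2)) • w - (1 / (1 + C ^ 2)) • Tinv (Dt w)‖ ≤
        Real.sqrt (1 - 1 / (1 + C ^ 2)) * ‖w‖) := by
  have key : ∀ (a b : ℝ) (w : H), ‖a • w - b • Tinv (Dt w)‖ ^ 2 =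
      a ^ 2 * ‖w‖ ^ 2 + b ^ 2 * ‖Tinv (Dt w)‖ ^ 2 := by
    intro a b w
    set u := Tinv (Dt w) with hu
    have hTu : T u = Dt w := hTinv₂ (Dt w)
    have h1 : ⟪T w, u⟫ = 0 := by
      rw [hsymm, hTu, real_inner_comm, hD]
    have h2 : ⟪T u, w⟫ = 0 := by rw [hTu, hD]
    rw [hnorm, hnorm w, hnorm u]
    simp only [map_sub, map_smul, inner_sub_left, inner_sub_right,
      inner_smul_left, inner_smul_right, real_inner_smul_left, real_inner_smul_right,
      h1, h2, starRingEnd_apply, star_trivial]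
    ring
  refine ⟨fun w => key _ _ w, fun C hC hCb w => ?_⟩
  have hden : 0 < 1 + C ^ 2 := by positivity
  set η' := 1 / (1 + C ^ 2) with hη'
  have hsq : ‖(1 - η') • w - η' • Tinv (Dt w)‖ ^ 2 ≤ (1 - η') * ‖w‖ ^ 2 := by
    rw [key]
    have h1 : ‖Tinv (Dt w)‖ ^ 2 ≤ C ^ 2 * ‖w‖ ^ 2 := by
      have := hCb w
      nlinarith [norm_nonneg (Tinv (Dt w)), norm_nonneg w]
    have h2 : (1 - η') ^ 2 + η' ^ 2 * C ^ 2 = 1 - η' := by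
      rw [hη']; field_simp; ring
    nlinarith [sq_nonneg η', norm_nonneg w]
  have h1η : 0 ≤ 1 - η' := by
    rw [hη']
    have : 1 / (1 + C ^ 2) ≤ 1 := by
      rw [div_le_one hden]; nlinarith
    linarith
  calc ‖(1 - η') • w - η' • Tinv (Dt w)‖
      = Real.sqrt (‖(1 - η') • w - η' • Tinv (Dt w)‖ ^ 2) := by
        rw [Real.sqrt_sq (norm_nonneg _)]
    _ ≤ Real.sqrt ((1 - η') * ‖w‖ ^ 2) := Real.sqrt_le_sqrt hsq
    _ = Real.sqrt (1 - η') * ‖w‖ := by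
        rw [Real.sqrt_mul h1η, Real.sqrt_sq (norm_nonneg _)]
end

section
/- Let V be a Hilbert space, K ⊂ V a nonempty closed convex set, A : V × V → ℝ a bounded coercive bilinear form (not necessarily symmetric), and f ∈ V'. Then there exists a unique u ∈ K such that A(u, u - v) ≤ ⟨f, u - v⟩ for all v ∈ K. -/
set_option maxHeartbeats 1000000

open InnerProductSpace

/-- Lions–Stampacchia theorem: if `V` is a Hilbert space, `K ⊆ V` a nonempty closed convex
set, `A` a bounded coercive (not necessarily symmetric) bilinear form on `V` and `f ∈ V'`,
then there is a unique `u ∈ K` with `A(u, u - v) ≤ ⟨f, u - v⟩` for all `v ∈ K`. -/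
theorem stmt_5 {V : Type*} [NormedAddCommGroup V] [InnerProductSpace ℝ V] [CompleteSpace V]
    (K : Set V) (hKne : K.Nonempty) (hKcl : IsClosed K) (hKcx : Convex ℝ K)
    (A : V →L[ℝ] V →L[ℝ] ℝ) (α : ℝ) (hα : 0 < α)
    (hcoer : ∀ w : V, α * ‖w‖ ^ 2 ≤ A w w)
    (M : ℝ) (hbdd : ∀ v w : V, |A v w| ≤ M * ‖v‖ * ‖w‖)
    (f : V →L[ℝ] ℝ) :
    ∃! u : V, u ∈ K ∧ ∀ v ∈ K, A u (u - v) ≤ f (u - v) := by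
  -- uniqueness
  have huniq : ∀ u₂ u₁ : V, (u₁ ∈ K ∧ ∀ v ∈ K, A u₁ (u₁ - v) ≤ f (u₁ - v)) →
      (u₂ ∈ K ∧ ∀ v ∈ K, A u₂ (u₂ - v) ≤ f (u₂ - v)) → u₁ = u₂ := by
    intro u₂ u₁ ⟨h1K, h1⟩ ⟨h2K, h2⟩
    have e1 := h1 u₂ h2K
    have e2 := h2 u₁ h1K
    have hsum : A (u₁ - u₂) (u₁ - u₂) ≤ 0 := by
      simp only [map_sub, ContinuousLinearMap.sub_apply] at e1 e2 ⊢
      linarith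
    have hc := hcoer (u₁ - u₂)
    have hx : ‖u₁ - u₂‖ ^ 2 ≤ 0 := by
      by_contra h
      push_neg at h
      nlinarith
    have h0 : ‖u₁ - u₂‖ = 0 :=
      pow_eq_zero_iff two_ne_zero |>.mp (le_antisymm hx (sq_nonneg _))
    exact sub_eq_zero.mp (norm_eq_zero.mp h0)
  -- replace M by N = max M α ≥ α > 0
  set N : ℝ := max M α with hNdef
  have hαN : α ≤ N := le_max_right _ _
  have hN : 0 < N := lt_of_lt_of_le hα hαN
  have hbddN : ∀ v w : V, |A v w| ≤ N * ‖v‖ * ‖w‖ := fun v w => by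
    refine (hbdd v w).trans ?_
    have hMN : M ≤ N := le_max_left _ _
    exact mul_le_mul_of_nonneg_right
      (mul_le_mul_of_nonneg_right hMN (norm_nonneg v)) (norm_nonneg w)
  have hAnorm : ∀ z : V, ‖A z‖ ≤ N * ‖z‖ := fun z =>
    ContinuousLinearMap.opNorm_le_bound _ (by positivity) fun w => by
      rw [Real.norm_eq_abs]; exact hbddN z w
  -- projection onto K
  have hKcomp : IsComplete K := hKcl.isComplete
  have hproj : ∀ u : V, ∃ p, p ∈ K ∧ ∀ w ∈ K, ⟪u - p, w - p⟫_ℝ ≤ 0 := by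
    intro u
    obtain ⟨p, hpK, hp⟩ := exists_norm_eq_iInf_of_complete_convex hKne hKcomp hKcx u
    exact ⟨p, hpK, (norm_eq_iInf_iff_real_inner_le_zero hKcx hpK).mp hp⟩
  choose P hPK hP using hproj
  -- the projection is 1-Lipschitz
  have hPlip : ∀ u w : V, ‖P u - P w‖ ≤ ‖u - w‖ := by
    intro u w
    have h1 := hP u (P w) (hPK w)
    have h2 := hP w (P u) (hPK u)
    have key : ‖P u - P w‖ ^ 2 ≤ ⟪u - w, P u - P w⟫_ℝ := by
      have e : ⟪u - w, P u - P w⟫_ℝ - ‖P u - P w‖ ^ 2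
          = (-⟪u - P u, P w - P u⟫_ℝ) + (-⟪w - P w, P u - P w⟫_ℝ) := by
        simp only [← real_inner_self_eq_norm_sq, inner_sub_left, inner_sub_right]
        ring
      nlinarith
    have := key.trans (real_inner_le_norm _ _)
    rcases eq_or_lt_of_le (norm_nonneg (P u - P w)) with h | h
    · rw [← h]; exact norm_nonneg _
    · nlinarith
  -- Riesz representation
  set R := (InnerProductSpace.toDual ℝ V).symm with hRdef
  have hR : ∀ (g : V →L[ℝ] ℝ) (x : V), ⟪R g, x⟫_ℝ = g x := fun g x =>
    InnerProductSpace.toDual_symm_apply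
  set ρ : ℝ := α / N ^ 2 with hρdef
  have hρ : 0 < ρ := by positivity
  set c : ℝ := 1 - α ^ 2 / N ^ 2 with hcdef
  have hc0 : 0 ≤ c := by
    rw [hcdef]
    have : α ^ 2 ≤ N ^ 2 := by nlinarith
    have : α ^ 2 / N ^ 2 ≤ 1 := by rw [div_le_one (by positivity)]; exact this
    linarith
  have hc1 : c < 1 := by
    rw [hcdef]; have : 0 < α ^ 2 / N ^ 2 := by positivity
    linarith
  set k : ℝ := Real.sqrt c with hkdef
  have hk0 : 0 ≤ k := Real.sqrt_nonneg _
  have hk1 : k < 1 := by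
    rw [hkdef]
    calc Real.sqrt c < Real.sqrt 1 := Real.sqrt_lt_sqrt hc0 hc1
    _ = 1 := Real.sqrt_one
  -- the contraction map
  set T : V → V := fun u => P (u + ρ • R (f - A u)) with hTdef
  -- key contraction estimate
  have hcontr : ∀ u w : V, ‖T u - T w‖ ≤ k * ‖u - w‖ := by
    intro u w
    set z := u - w with hzdef
    have step1 : (u + ρ • R (f - A u)) - (w + ρ • R (f - A w)) = z - ρ • R (A z) := by
      have h : R (f - A u) - R (f - A w) = -(R (A z)) := by
        rw [← map_sub, ← map_neg]
        congr 1
        rw [hzdef, map_sub]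
        abel
      calc (u + ρ • R (f - A u)) - (w + ρ • R (f - A w))
          = (u - w) + ρ • (R (f - A u) - R (f - A w)) := by rw [smul_sub]; abel
        _ = z - ρ • R (A z) := by rw [h, hzdef, smul_neg]; abel
    have hRz : ‖R (A z)‖ ≤ N * ‖z‖ := by
      rw [LinearIsometryEquiv.norm_map]; exact hAnorm z
    have hinner : ρ * (α * ‖z‖ ^ 2) ≤ ⟪z, ρ • R (A z)⟫_ℝ := by
      rw [real_inner_smul_right, real_inner_comm, hR]
      have := hcoer z
      nlinarith
    have hsq : ‖z - ρ • R (A z)‖ ^ 2 ≤ c * ‖z‖ ^ 2 := by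
      rw [norm_sub_sq_real]
      have h2 : ‖ρ • R (A z)‖ ^ 2 ≤ ρ ^ 2 * (N * ‖z‖) ^ 2 := by
        rw [norm_smul, Real.norm_eq_abs, abs_of_pos hρ, mul_pow]
        have : ‖R (A z)‖ ^ 2 ≤ (N * ‖z‖) ^ 2 := by
          nlinarith [norm_nonneg (R (A z))]
        nlinarith [sq_nonneg ρ]
      have hceq : c * ‖z‖ ^ 2 = ‖z‖ ^ 2 - 2 * (ρ * (α * ‖z‖ ^ 2)) + ρ ^ 2 * (N * ‖z‖) ^ 2 := by
        rw [hcdef, hρdef]; field_simp; ring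
      rw [hceq]
      linarith
    have := hPlip (u + ρ • R (f - A u)) (w + ρ • R (f - A w))
    rw [step1] at this
    refine this.trans ?_
    have hsq' : ‖z - ρ • R (A z)‖ ^ 2 ≤ (k * ‖z‖) ^ 2 := by
      rw [mul_pow, hkdef, Real.sq_sqrt hc0]; exact hsq
    have hk2 : 0 ≤ k * ‖z‖ := by positivity
    nlinarith [norm_nonneg (z - ρ • R (A z))]
  -- Banach fixed point
  have hlip : LipschitzWith (Real.toNNReal k) T := by
    apply LipschitzWith.of_dist_le_mul
    intro u w
    rw [Real.coe_toNNReal k hk0, dist_eq_norm, dist_eq_norm]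
    exact hcontr u w
  have hCW : ContractingWith (Real.toNNReal k) T := by
    constructor
    · exact_mod_cast by rwa [← Real.toNNReal_one, Real.toNNReal_lt_toNNReal_iff one_pos]
    · exact hlip
  haveI : Nonempty V := ⟨0⟩
  set u := hCW.fixedPoint T with hudef
  have hfix : T u = u := hCW.fixedPoint_isFixedPt
  have huK : u ∈ K := by rw [← hfix]; exact hPK _
  refine ⟨u, ⟨huK, ?_⟩, fun y hy => huniq u y hy ⟨huK, ?_⟩⟩ <;>
  · intro v hv
    have hchar := hP (u + ρ • R (f - A u)) v hv
    have hfix' : P (u + ρ • R (f - A u)) = u := hfix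
    rw [hfix'] at hchar
    have : (u + ρ • R (f - A u)) - u = ρ • R (f - A u) := by abel
    rw [this, real_inner_smul_left, hR] at hchar
    have hfa : (f - A u) (v - u) ≤ 0 :=
      (mul_le_mul_iff_right₀ hρ).mp (by rw [mul_zero]; exact hchar)
    simp only [ContinuousLinearMap.sub_apply] at hfa
    have h1 : f (u - v) = - f (v - u) := by rw [show u - v = -(v-u) by abel, map_neg]
    have h2 : A u (u - v) = - A u (v - u) := by rw [show u - v = -(v-u) by abel, map_neg]
    rw [h1, h2]
    linarith
end

section
/- With the assumptions of the previous statement, suppose additionally that u ∈ C(Ω̄) and χ ∈ C(Ω̄). Then for every φ ∈ C₀^∞(N), where N := {x ∈ Ω : u(x) > χ(x)} is the (open) non-contact set, ⟨Λ, φ⟩ = 0. -/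
open MeasureTheory

/-- If, in addition to the setting of the obstacle variational inequality, `u` and `χ` are
continuous, then the Lagrange multiplier distribution `Λ = A(u,·) - f` vanishes on test
functions supported in the open non-contact set `N = {x ∈ Ω : u(x) > χ(x)}`. -/
theorem stmt_7 {d : ℕ} (Ω : Set (EuclideanSpace ℝ (Fin d))) (hΩopen : IsOpen Ω)
    {V : Type*} [NormedAddCommGroup V] [InnerProductSpace ℝ V] [CompleteSpace V]
    (ι : V →ₗ[ℝ] (EuclideanSpace ℝ (Fin d) → ℝ))
    (χ : EuclideanSpace ℝ (Fin d) → ℝ) (hχ : Continuous χ)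
    (A : V →L[ℝ] V →L[ℝ] ℝ) (f : V →L[ℝ] ℝ)
    (u : V) (huc : Continuous (ι u))
    (hu : ∀ᵐ x ∂(volume.restrict Ω), χ x ≤ ι u x)
    (hVI : ∀ v : V, (∀ᵐ x ∂(volume.restrict Ω), χ x ≤ ι v x) →
      A u (u - v) ≤ f (u - v)) :
    ∀ φ : EuclideanSpace ℝ (Fin d) → ℝ, ContDiff ℝ (⊤ : ℕ∞) φ → HasCompactSupport φ →
      tsupport φ ⊆ {x ∈ Ω | χ x < ι u x} → ∀ p : V, ι p = φ →
        A u p - f p = 0 := by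
  intro φ hφsm hφc hφsupp p hp
  have key : ∃ ε : ℝ, 0 < ε ∧ ∀ x, χ x ≤ ι u x →
      χ x ≤ ι u x - ε * φ x ∧ χ x ≤ ι u x + ε * φ x := by
    by_cases hK : (tsupport φ).Nonempty
    · obtain ⟨x₀, hx₀, hmin⟩ := hφc.exists_isMinOn hK ((huc.sub hχ).continuousOn)
      obtain ⟨x₁, hx₁, hmax⟩ := hφc.exists_isMaxOn hK
        ((continuous_abs.comp hφsm.continuous).continuousOn)
      set δ := ι u x₀ - χ x₀ with hδ
      set M := |φ x₁| with hM
      have hδpos : 0 < δ := sub_pos.mpr (hφsupp hx₀).2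
      have hMnn : 0 ≤ M := abs_nonneg _
      refine ⟨δ / (M + 1), by positivity, fun x hx => ?_⟩
      by_cases hxK : x ∈ tsupport φ
      · have h1 : |φ x| ≤ M := hmax hxK
        have h2 : δ ≤ ι u x - χ x := hmin hxK
        have h3 : δ / (M + 1) * |φ x| ≤ δ := by
          rw [div_mul_eq_mul_div, div_le_iff₀ (by linarith)]
          nlinarith
        have h4 : |δ / (M + 1) * φ x| ≤ δ := by
          rw [abs_mul, abs_of_nonneg (by positivity : (0:ℝ) ≤ δ / (M + 1))]
          exact h3
        rw [abs_le] at h4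
        constructor <;> linarith
      · have hz : φ x = 0 := image_eq_zero_of_notMem_tsupport hxK
        simp [hz, hx]
    · have hzero : ∀ x, φ x = 0 := fun x =>
        image_eq_zero_of_notMem_tsupport (fun h => hK ⟨x, h⟩)
      exact ⟨1, one_pos, fun x hx => by simp [hzero, hx]⟩
  obtain ⟨ε, hε, hbd⟩ := key
  have h₁ : A u (ε • p) ≤ f (ε • p) := by
    have h := hVI (u - ε • p) ?_
    · simpa using h
    · filter_upwards [hu] with x hx
      have := (hbd x hx).1
      simpa [map_sub, _root_.map_smul, hp] using this
  have h₂ : A u (-(ε • p)) ≤ f (-(ε • p)) := by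
    have h := hVI (u + ε • p) ?_
    · simpa [sub_add_eq_sub_sub] using h
    · filter_upwards [hu] with x hx
      have := (hbd x hx).2
      simpa [map_add, _root_.map_smul, hp] using this
  simp only [_root_.map_smul, map_neg, smul_eq_mul] at h₁ h₂
  have hAf : A u p = f p := le_antisymm (by nlinarith) (by nlinarith)
  linarith
end

section
/- Let V be a Hilbert space of functions, A a bounded coercive bilinear form on V, K = {w ∈ V : w ≥ χ a.e.}, and let u ∈ K solve the obstacle variational inequality with data f. Suppose u_ε ∈ K is a supersolution, i.e. A(u_ε, v) ≥ ⟨f, v⟩ for all nonnegative v ∈ V, with u_ε ∈ K. Then u_ε ≥ u a.e. in Ω, provided that A satisfies the truncation property A(w, max{w,0}) ≥ α‖max{w,0}‖²_V for all w ∈ V. -/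
open MeasureTheory

/-- Comparison principle: if `u` solves the obstacle variational inequality and `u_ε ∈ K` is
a supersolution (`A(u_ε, v) ≥ ⟨f, v⟩` for every a.e. nonnegative `v ∈ V`), and `A` satisfies
the truncation property `A(w, w⁺) ≥ α‖w⁺‖²`, then `u_ε ≥ u` a.e. -/
theorem stmt_10 {α' : Type*} [MeasurableSpace α'] (μ : Measure α')
    {V : Type*} [NormedAddCommGroup V] [InnerProductSpace ℝ V] [CompleteSpace V]
    (ι : V →ₗ[ℝ] (α' → ℝ))
    (pos : V → V) (hpos : ∀ w : V, ∀ x, ι (pos w) x = max (ι w x) 0)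
    (χ : α' → ℝ)
    (A : V →L[ℝ] V →L[ℝ] ℝ) (f : V →L[ℝ] ℝ)
    (a c : ℝ) (ha : 0 < a) (hc : 0 < c)
    (hcoer : ∀ w : V, a * ‖w‖ ^ 2 ≤ A w w)
    (hbdd : ∀ v w : V, |A v w| ≤ c * ‖v‖ * ‖w‖)
    (htrunc : ∀ w : V, a * ‖pos w‖ ^ 2 ≤ A w (pos w))
    (u : V) (hu : ∀ᵐ x ∂μ, χ x ≤ ι u x)
    (hVI : ∀ v : V, (∀ᵐ x ∂μ, χ x ≤ ι v x) → A u (u - v) ≤ f (u - v))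
    (uε : V) (huε : ∀ᵐ x ∂μ, χ x ≤ ι uε x)
    (hsuper : ∀ v : V, (∀ᵐ x ∂μ, 0 ≤ ι v x) → f v ≤ A uε v) :
    ∀ᵐ x ∂μ, ι u x ≤ ι uε x := by
  set p := pos (u - uε) with hp
  have hv : ∀ᵐ x ∂μ, χ x ≤ ι (u - p) x := by
    filter_upwards [hu, huε] with x h1 h2
    have hpx := hpos (u - uε) x
    simp only [map_sub, Pi.sub_apply] at hpx ⊢
    rw [hp, hpx]
    rcases le_total (ι u x - ι uε x) 0 with h | h
    · rw [max_eq_right h]; linarith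
    · rw [max_eq_left h]; linarith
  have h1 : A u p ≤ f p := by
    have := hVI (u - p) hv
    simpa using this
  have h2 : f p ≤ A uε p := by
    refine hsuper p ?_
    refine Filter.Eventually.of_forall fun x => ?_
    rw [hp, hpos]; exact le_max_right _ _
  have h3 : a * ‖p‖ ^ 2 ≤ 0 := by
    have ht := htrunc (u - uε)
    rw [map_sub] at ht
    simp only [ContinuousLinearMap.sub_apply] at ht
    rw [← hp] at ht
    linarith
  have hp0 : p = 0 := by
    have : ‖p‖ ^ 2 ≤ 0 := nonpos_of_mul_nonpos_right (by linarith) ha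
    have := sq_nonneg ‖p‖
    have : ‖p‖ = 0 := by nlinarith
    simpa using this
  refine Filter.Eventually.of_forall fun x => ?_
  have hpx := hpos (u - uε) x
  rw [← hp, hp0] at hpx
  simp only [map_sub, map_zero, Pi.sub_apply, Pi.zero_apply] at hpx
  have := le_of_max_le_left (le_of_eq hpx.symm)
  linarith
end
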